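/- A group G is twisted conjugacy separable (i.e., φ-conjugacy separable for every automorphism φ of G with R(φ) < ∞) if and only if G has property RP, i.e., property RP(φ) holds for every automorphism φ of G with R(φ) < ∞. -/

import Mathlib

/-- `x` and `y` are `φ`-conjugate (twisted conjugate): `y = g * x * φ(g)⁻¹` for some `g`. -/
def TwistedConj {G : Type*} [Group G] (φ : MulAut G) (x y : G) : Prop :=
  ∃ g : G, y = g * x * (φ g)⁻¹

/-- Twisted conjugacy is an equivalence relation; its classes are the
`φ`-conjugacy (Reidemeister) classes. -/
def twSetoid (G : Type*) [Group G] (φ : MulAut G) : Setoid G where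
  r := TwistedConj φ
  iseqv := by
    refine ⟨fun x => ⟨1, by simp⟩, ?_, ?_⟩
    · rintro x y ⟨g, rfl⟩
      exact ⟨g⁻¹, by simp [mul_assoc]⟩
    · rintro x y z ⟨g, rfl⟩ ⟨h, rfl⟩
      exact ⟨h * g, by simp [mul_assoc]⟩

/-- A finite quotient of `G` respecting `φ` that separates the elements `x` and `y`:
a finite group `K`, an automorphism `φ_K`, and a surjective homomorphism `F : G → K`
with `F ∘ φ = φ_K ∘ F` such that `F x` and `F y` are not `φ_K`-conjugate in `K`. -/
inductive SepWitness {G : Type*} [Group G] (φ : MulAut G) (x y : G) : Prop where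
  | intro (K : Type) [grp : Group K] [fin : Finite K] (φK : MulAut K) (F : G →* K)
      (surj : Function.Surjective F) (comm : ∀ g : G, F (φ g) = φK (F g))
      (sep : ¬ TwistedConj φK (F x) (F y)) : SepWitness φ x y

/-- `G` is `φ`-conjugacy separable: any pair of non-`φ`-conjugate elements of `G`
are non-`φ_K`-conjugate in some finite quotient of `G` respecting `φ`. -/
def PhiConjSep {G : Type*} [Group G] (φ : MulAut G) : Prop :=
  ∀ x y : G, ¬ TwistedConj φ x y → SepWitness φ x y

/-- Property `RP(φ)`: there exist a finite group `K`, an automorphism `φ_K` of `K`, and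
a surjective homomorphism `F : G → K` with `F ∘ φ = φ_K ∘ F` such that the characteristic
function of every `φ`-conjugacy (Reidemeister) class of `G` factors through `F` as the
characteristic function of a subset of `K`. -/
inductive RP {G : Type*} [Group G] (φ : MulAut G) : Prop where
  | intro (K : Type) [grp : Group K] [fin : Finite K] (φK : MulAut K) (F : G →* K)
      (surj : Function.Surjective F) (comm : ∀ g : G, F (φ g) = φK (F g))
      (factors : ∀ x : G, ∃ S : Set K, {g : G | TwistedConj φ x g} = F ⁻¹' S) : RP φ

/-!
If `F : G → K` is a finite quotient compatible with `φ`, then `F x` and `F y` are twisted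
conjugate in `K` exactly when `y` is twisted conjugate to an element of the fibre of `F x`.
Hence RP(φ) says that a single finite quotient separates all pairs of classes, which gives
separability. Conversely, when there are finitely many classes, let `M` be the intersection of
the (φ-invariant, finite-index) kernels of separating quotients, one for each pair of distinct
classes. Every twisted class is then a union of cosets of `M`, so `G ⧸ M` witnesses RP(φ).
-/

section

variable {G : Type*} [Group G] {φ : MulAut G}

namespace TwistedConj

theorem symm {x y : G} (h : TwistedConj φ x y) : TwistedConj φ y x :=
  (twSetoid G φ).symm h

theorem trans {x y z : G} (hxy : TwistedConj φ x y) (hyz : TwistedConj φ y z) :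
    TwistedConj φ x z :=
  (twSetoid G φ).trans hxy hyz

theorem map {K : Type*} [Group K] {ψ : MulAut K} {F : G →* K}
    (comm : ∀ g, F (φ g) = ψ (F g)) {x y : G} (h : TwistedConj φ x y) :
    TwistedConj ψ (F x) (F y) := by
  obtain ⟨g, rfl⟩ := h
  exact ⟨F g, by simp [comm]⟩

theorem exists_of_map {K : Type*} [Group K] {ψ : MulAut K} {F : G →* K}
    (hF : Function.Surjective F) (comm : ∀ g, F (φ g) = ψ (F g)) {x y : G}
    (h : TwistedConj ψ (F x) (F y)) : ∃ z, TwistedConj φ x z ∧ F z = F y := by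
  obtain ⟨k, hk⟩ := h
  obtain ⟨g, rfl⟩ := hF k
  exact ⟨g * x * (φ g)⁻¹, ⟨g, rfl⟩, by simp [comm, hk]⟩

end TwistedConj

theorem twistedConj_of_map_eq {K : Type*} [Group K] {F : G →* K}
    (factors : ∀ x : G, ∃ S : Set K, {g : G | TwistedConj φ x g} = F ⁻¹' S) {z w : G}
    (h : F z = F w) : TwistedConj φ z w := by
  obtain ⟨S, hS⟩ := factors z
  have hz : z ∈ F ⁻¹' S := hS ▸ (twSetoid G φ).refl z
  have hw : w ∈ F ⁻¹' S := by simpa [Set.mem_preimage, h] using hz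
  rwa [← hS] at hw

theorem RP.phiConjSep (h : RP φ) : PhiConjSep φ := by
  obtain ⟨K, ψ, F, hF, comm, factors⟩ := h
  intro x y hxy
  refine ⟨K, ψ, F, hF, comm, fun hK => hxy ?_⟩
  obtain ⟨z, hxz, hzy⟩ := TwistedConj.exists_of_map hF comm hK
  exact hxz.trans (twistedConj_of_map_eq factors hzy)

/-- The universe change through `Shrink` is needed because `RP` asks for `K : Type`. -/
theorem RP.of_fibers {K : Type*} [Group K] [Finite K] (ψ : MulAut K) (F : G →* K)
    (hF : Function.Surjective F) (comm : ∀ g, F (φ g) = ψ (F g))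
    (fibers : ∀ z w, F z = F w → TwistedConj φ z w) : RP φ := by
  let e : Shrink.{0} K ≃* K := Shrink.mulEquiv
  let F' : G →* Shrink.{0} K := e.symm.toMonoidHom.comp F
  refine RP.intro (Shrink.{0} K) (e.trans (ψ.trans e.symm)) F'
    (e.symm.surjective.comp hF) (fun g => by simp [F', comm])
    fun x => ⟨F' '' {g | TwistedConj φ x g}, ?_⟩
  refine (Set.subset_preimage_image _ _).antisymm ?_
  rintro w ⟨z, hxz, hzw⟩
  exact hxz.trans (fibers z w (e.symm.injective hzw))

theorem RP.of_subgroup (M : Subgroup G) [M.Normal] [M.FiniteIndex]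
    (hM : M.comap (φ : G →* G) = M) (cosets : ∀ z w, z⁻¹ * w ∈ M → TwistedConj φ z w) :
    RP φ := by
  have hφM : M.map (φ : G →* G) = M := by
    conv_lhs => rw [← hM]
    exact Subgroup.map_comap_eq_self_of_surjective φ.surjective M
  refine RP.of_fibers (QuotientGroup.congr M M φ hφM) (QuotientGroup.mk' M)
    (QuotientGroup.mk'_surjective M) (fun g => (QuotientGroup.congr_mk M M φ hφM g).symm)
    fun z w h => cosets z w (QuotientGroup.eq.mp h)

theorem SepWitness.exists_subgroup {x y : G} (h : SepWitness φ x y) :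
    ∃ N : Subgroup G, N.Normal ∧ N.comap (φ : G →* G) = N ∧ N.FiniteIndex ∧
      ∀ z w, TwistedConj φ x z → TwistedConj φ y w → z⁻¹ * w ∉ N := by
  obtain ⟨K, ψ, F, hF, comm, sep⟩ := h
  have : Finite F.range := Subtype.finite
  refine ⟨F.ker, inferInstance, ?_, Subgroup.finiteIndex_ker F, fun z w hxz hyw hzw => sep ?_⟩
  · ext n
    simp [comm]
  · have hFzw : F z = F w := by rwa [MonoidHom.mem_ker, map_mul, map_inv, inv_mul_eq_one] at hzw
    exact (hxz.map comm).trans (hFzw ▸ (hyw.map comm).symm)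

theorem PhiConjSep.rp [Finite (Quotient (twSetoid G φ))] (h : PhiConjSep φ) : RP φ := by
  let Q := Quotient (twSetoid G φ)
  have separating : ∀ c : {c : Q × Q // c.1 ≠ c.2}, ∃ N : Subgroup G, N.Normal ∧
      N.comap (φ : G →* G) = N ∧ N.FiniteIndex ∧
      ∀ z w, TwistedConj φ c.1.1.out z → TwistedConj φ c.1.2.out w → z⁻¹ * w ∉ N := by
    rintro ⟨⟨p, q⟩, hpq⟩
    refine (h p.out q.out fun hconj => hpq ?_).exists_subgroup
    rw [← p.out_eq, ← q.out_eq]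
    exact Quotient.sound hconj
  choose N hNormal hcomap hindex hsep using separating
  have : (⨅ c, N c).Normal := Subgroup.normal_iInf_normal hNormal
  have : (⨅ c, N c).FiniteIndex := Subgroup.finiteIndex_iInf hindex
  refine RP.of_subgroup (⨅ c, N c) (by simp [Subgroup.comap_iInf, hcomap]) fun z w hzw => ?_
  by_contra hconj
  let c : {c : Q × Q // c.1 ≠ c.2} :=
    ⟨(Quotient.mk _ z, Quotient.mk _ w), fun hzw' => hconj (Quotient.exact hzw')⟩
  exact hsep c z w (Quotient.mk_out (s := twSetoid G φ) z)
    (Quotient.mk_out (s := twSetoid G φ) w) (iInf_le N c hzw)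

end

/-- `G` is twisted conjugacy separable (i.e. `φ`-conjugacy separable for every
automorphism `φ` with `R(φ) < ∞`) if and only if `G` has property `RP`, i.e.
`RP(φ)` holds for every automorphism `φ` with `R(φ) < ∞`. -/
theorem twistedConjSep_iff_rp (G : Type*) [Group G] :
    (∀ φ : MulAut G, Finite (Quotient (twSetoid G φ)) → PhiConjSep φ) ↔
    (∀ φ : MulAut G, Finite (Quotient (twSetoid G φ)) → RP φ) :=
  ⟨fun h φ hfin => (h φ hfin).rp, fun h φ hfin => (h φ hfin).phiConjSep⟩
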